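/- arXiv:0809.3258 — 2 statements merged into one kernel-verified Lean document; each statement's English description precedes it below -/
import Mathlib

section
/- If A is a smooth ℂ-algebra, then the derivation Δ_A lies in the commutator subspace [A, Der(A, A⊗A)]; that is, there are finitely many elements aᵢ ∈ A and derivations δᵢ ∈ Der(A, A⊗A) such that Δ_A = Σᵢ (aᵢ·δᵢ − δᵢ·aᵢ), the actions being those of the inner A-bimodule structure on Der(A, A⊗A). -/
open TensorProduct

set_option synthInstance.maxHeartbeats 1000000

universe u

section OutDer

variable (A : Type u) [Ring A] [Algebra ℂ A]

/-- The space `Der(A, A⊗A)` of ℂ-linear derivations `A → A ⊗[ℂ] A` with respect to the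
*outer* bimodule structure on `A ⊗ A` (`a·(x⊗y)·b = ax ⊗ yb`), i.e. ℂ-linear maps with
`δ(xy) = δ(x)·(1⊗y) + (x⊗1)·δ(y)`. -/
def OutDer : Submodule ℂ (A →ₗ[ℂ] A ⊗[ℂ] A) where
  carrier := {δ | ∀ x y : A,
    δ (x * y) = δ x * ((1 : A) ⊗ₜ[ℂ] y) + (x ⊗ₜ[ℂ] (1 : A)) * δ y}
  add_mem' := by
    intro f g hf hg x y
    simp only [LinearMap.add_apply, hf x y, hg x y, add_mul, mul_add]
    abel
  zero_mem' := by
    intro x y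
    simp
  smul_mem' := by
    intro c f hf x y
    simp only [LinearMap.smul_apply, hf x y, smul_add, smul_mul_assoc, mul_smul_comm]

variable {A}

/-- The inner bimodule action `δ ↦ a·δ·b` on `Der(A, A⊗A)` (coming from the inner
bimodule structure `a·(x⊗y)·b = xb ⊗ ay` on `A ⊗ A`). -/
noncomputable def innerLR (a : A) (δ : ↥(OutDer A)) (b : A) : ↥(OutDer A) :=
  ⟨(LinearMap.mulLeft ℂ ((1 : A) ⊗ₜ[ℂ] a)) ∘ₗ
      (LinearMap.mulRight ℂ (b ⊗ₜ[ℂ] (1 : A))) ∘ₗ (δ : A →ₗ[ℂ] A ⊗[ℂ] A), by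
    intro x y
    have hδ := δ.2 x y
    have h1 : ((1 : A) ⊗ₜ[ℂ] y : A ⊗[ℂ] A) * (b ⊗ₜ[ℂ] (1 : A)) =
        (b ⊗ₜ[ℂ] (1 : A) : A ⊗[ℂ] A) * ((1 : A) ⊗ₜ[ℂ] y) := by
      simp [Algebra.TensorProduct.tmul_mul_tmul]
    have h2 : ((1 : A) ⊗ₜ[ℂ] a : A ⊗[ℂ] A) * (x ⊗ₜ[ℂ] (1 : A)) =
        (x ⊗ₜ[ℂ] (1 : A) : A ⊗[ℂ] A) * ((1 : A) ⊗ₜ[ℂ] a) := by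
      simp [Algebra.TensorProduct.tmul_mul_tmul]
    simp only [LinearMap.comp_apply, LinearMap.mulLeft_apply, LinearMap.mulRight_apply, hδ]
    rw [add_mul, mul_add]
    congr 1
    · rw [mul_assoc ((δ : A →ₗ[ℂ] A ⊗[ℂ] A) x), h1, ← mul_assoc ((δ : A →ₗ[ℂ] A ⊗[ℂ] A) x),
        ← mul_assoc, ← mul_assoc]
    · rw [mul_assoc (x ⊗ₜ[ℂ] (1 : A) : A ⊗[ℂ] A), ← mul_assoc ((1 : A) ⊗ₜ[ℂ] a : A ⊗[ℂ] A),
        h2, mul_assoc]⟩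

/-- The distinguished derivation `Δ_A : x ↦ x⊗1 − 1⊗x` in `Der(A, A⊗A)`. -/
noncomputable def deltaDer : ↥(OutDer A) :=
  ⟨(TensorProduct.mk ℂ A A).flip 1 - TensorProduct.mk ℂ A A 1, by
    intro x y
    simp only [LinearMap.sub_apply, LinearMap.flip_apply, TensorProduct.mk_apply]
    rw [sub_mul, mul_sub]
    simp only [Algebra.TensorProduct.tmul_mul_tmul, one_mul, mul_one]
    abel⟩

end OutDer

section InnerOneSided

variable {A : Type u} [Ring A] [Algebra ℂ A]

/-- The left inner action `δ ↦ a·δ` on `Der(A, A⊗A)`. -/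
noncomputable def innerL (a : A) (δ : ↥(OutDer A)) : ↥(OutDer A) :=
  ⟨(LinearMap.mulLeft ℂ ((1 : A) ⊗ₜ[ℂ] a)) ∘ₗ (δ : A →ₗ[ℂ] A ⊗[ℂ] A), by
    intro x y
    have hδ := δ.2 x y
    have h2 : ((1 : A) ⊗ₜ[ℂ] a : A ⊗[ℂ] A) * (x ⊗ₜ[ℂ] (1 : A)) =
        (x ⊗ₜ[ℂ] (1 : A) : A ⊗[ℂ] A) * ((1 : A) ⊗ₜ[ℂ] a) := by
      simp [Algebra.TensorProduct.tmul_mul_tmul]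
    simp only [LinearMap.comp_apply, LinearMap.mulLeft_apply, hδ]
    rw [mul_add]
    congr 1
    · rw [← mul_assoc]
    · rw [← mul_assoc, h2, mul_assoc]⟩

/-- The right inner action `δ ↦ δ·b` on `Der(A, A⊗A)`. -/
noncomputable def innerR (δ : ↥(OutDer A)) (b : A) : ↥(OutDer A) :=
  ⟨(LinearMap.mulRight ℂ (b ⊗ₜ[ℂ] (1 : A))) ∘ₗ (δ : A →ₗ[ℂ] A ⊗[ℂ] A), by
    intro x y
    have hδ := δ.2 x y
    have h1 : ((1 : A) ⊗ₜ[ℂ] y : A ⊗[ℂ] A) * (b ⊗ₜ[ℂ] (1 : A)) =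
        (b ⊗ₜ[ℂ] (1 : A) : A ⊗[ℂ] A) * ((1 : A) ⊗ₜ[ℂ] y) := by
      simp [Algebra.TensorProduct.tmul_mul_tmul]
    simp only [LinearMap.comp_apply, LinearMap.mulRight_apply, hδ]
    rw [add_mul]
    congr 1
    · rw [mul_assoc, h1, ← mul_assoc]
    · rw [mul_assoc]⟩

end InnerOneSided




section Smooth

variable (B : Type u) [Ring B] [Algebra ℂ B]

/-- `B` as a module over its enveloping algebra `B^e = B ⊗[ℂ] Bᵐᵒᵖ`
(the action `(b₁ ⊗ b₂ᵒᵖ) • x = b₁ * x * b₂`). -/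
noncomputable instance envModule : Module (B ⊗[ℂ] Bᵐᵒᵖ) B :=
  TensorProduct.Algebra.module

/-- `Ω¹B`: the kernel of the multiplication map `B ⊗[ℂ] B → B`, viewed as a module over
the enveloping algebra `B^e = B ⊗[ℂ] Bᵐᵒᵖ` via the outer bimodule structure.  (Here
`B ⊗[ℂ] B` with the outer `B^e`-action is canonically identified with the left regular
module `B^e`, under which the multiplication map becomes `ξ ↦ ξ • 1`.) -/
noncomputable def Omega1 : Submodule (B ⊗[ℂ] Bᵐᵒᵖ) (B ⊗[ℂ] Bᵐᵒᵖ) :=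
  LinearMap.ker (LinearMap.toSpanSingleton (B ⊗[ℂ] Bᵐᵒᵖ) B 1)

/-- A ℂ-algebra `B` is *smooth* if it is finitely generated as a ℂ-algebra and
`Ω¹B` is a finitely generated projective module over `B^e = B ⊗[ℂ] Bᵐᵒᵖ`. -/
def IsSmoothAlgebra : Prop :=
  Algebra.FiniteType ℂ B ∧ Module.Finite (B ⊗[ℂ] Bᵐᵒᵖ) (Omega1 B) ∧
    Module.Projective (B ⊗[ℂ] Bᵐᵒᵖ) (Omega1 B)

end Smooth

/-!
Transporting along `A ⊗ A ≃ A ⊗ Aᵐᵒᵖ`, every `Aᵉ`-linear functional `φ` on `Ω¹A` yields the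
derivation `φ ∘ d`, where `d x = x ⊗ 1 − 1 ⊗ x`; the inclusion `Ω¹A ↪ Aᵉ` yields `Δ_A`.
A finite dual basis of the finitely generated projective module `Ω¹A` writes this inclusion as
`Σᵢ φᵢ(-)·gᵢ` with `gᵢ ∈ Ω¹A`, and `Ω¹A` is generated by the `d c`. So it suffices that each
functional `φ(-)·g` with `g ∈ Ω¹A` gives an element of the commutator span, which is shown by
induction on `g`: a coefficient of `g` is absorbed into `φ`, and `φ(-)·d c` gives
`δ·c − c·δ` for `δ = φ ∘ d`.
-/

theorem Module.Finite.exists_sum_smul_eq_self_of_projective (R M : Type*) [Semiring R]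
    [AddCommMonoid M] [Module R M] [Module.Finite R M] [Module.Projective R M] :
    ∃ (n : ℕ) (φ : Fin n → M →ₗ[R] R) (g : Fin n → M), ∀ m, ∑ i, φ i m • g i = m := by
  obtain ⟨n, f, s, -, -, hfs⟩ := Module.Finite.exists_comp_eq_id_of_projective R M
  refine ⟨n, fun i => LinearMap.proj i ∘ₗ s, fun i => f fun j => if i = j then 1 else 0,
    fun m => ?_⟩
  conv_rhs => rw [← LinearMap.id_apply (R := R) m, ← hfs, LinearMap.comp_apply,
    f.pi_apply_eq_sum_univ]
  rfl

section Omega1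

open MulOpposite

variable {A : Type u} [Ring A] [Algebra ℂ A]

noncomputable def envEquiv : (A ⊗[ℂ] A) ≃ₗ[ℂ] (A ⊗[ℂ] Aᵐᵒᵖ) :=
  TensorProduct.congr (LinearEquiv.refl ℂ A) (opLinearEquiv ℂ)

@[simp]
lemma envEquiv_symm_tmul (x : A) (z : Aᵐᵒᵖ) : envEquiv.symm (x ⊗ₜ[ℂ] z) = x ⊗ₜ[ℂ] z.unop := by
  simp [envEquiv]

lemma envEquiv_symm_mul_left (a : A) (z : Aᵐᵒᵖ) (θ : A ⊗[ℂ] Aᵐᵒᵖ) :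
    envEquiv.symm ((a ⊗ₜ[ℂ] z) * θ) =
      (a ⊗ₜ[ℂ] (1 : A)) * envEquiv.symm θ * ((1 : A) ⊗ₜ[ℂ] z.unop) := by
  induction θ using TensorProduct.induction_on with
  | zero => simp
  | tmul x z => simp [Algebra.TensorProduct.tmul_mul_tmul]
  | add θ η ihθ ihη => simp only [mul_add, map_add, add_mul, ihθ, ihη]

lemma envEquiv_symm_mul_right (a : A) (z : Aᵐᵒᵖ) (θ : A ⊗[ℂ] Aᵐᵒᵖ) :
    envEquiv.symm (θ * (a ⊗ₜ[ℂ] z)) =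
      ((1 : A) ⊗ₜ[ℂ] z.unop) * envEquiv.symm θ * (a ⊗ₜ[ℂ] (1 : A)) := by
  induction θ using TensorProduct.induction_on with
  | zero => simp
  | tmul x z => simp [Algebra.TensorProduct.tmul_mul_tmul]
  | add θ η ihθ ihη => simp only [mul_add, map_add, add_mul, ihθ, ihη]

lemma toSpanSingleton_one_tmul (x : A) (z : Aᵐᵒᵖ) :
    LinearMap.toSpanSingleton (A ⊗[ℂ] Aᵐᵒᵖ) A 1 (x ⊗ₜ[ℂ] z) = x * z.unop := by
  show x * ((1 : A) * z.unop) = x * z.unop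
  rw [one_mul]

noncomputable def universalDer : A →ₗ[ℂ] Omega1 A where
  toFun x := ⟨x ⊗ₜ[ℂ] (1 : Aᵐᵒᵖ) - 1 ⊗ₜ[ℂ] op x, by
    rw [Omega1, LinearMap.mem_ker, map_sub, toSpanSingleton_one_tmul, toSpanSingleton_one_tmul,
      unop_one, unop_op, mul_one, one_mul, sub_self]⟩
  map_add' x y := by ext; simp [TensorProduct.tmul_add, TensorProduct.add_tmul]; abel
  map_smul' c x := by
    ext
    simp only [RingHom.id_apply, Submodule.coe_smul_of_tower, smul_sub, op_smul,
      TensorProduct.tmul_smul, TensorProduct.smul_tmul']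

@[simp]
lemma coe_universalDer (x : A) :
    (universalDer x : A ⊗[ℂ] Aᵐᵒᵖ) = x ⊗ₜ[ℂ] (1 : Aᵐᵒᵖ) - 1 ⊗ₜ[ℂ] op x := rfl

lemma universalDer_mul (x y : A) :
    universalDer (x * y) =
      (x ⊗ₜ[ℂ] (1 : Aᵐᵒᵖ)) • universalDer y + ((1 : A) ⊗ₜ[ℂ] op y) • universalDer x := by
  ext
  simp only [coe_universalDer, Submodule.coe_add, Submodule.coe_smul, smul_eq_mul, mul_sub,
    Algebra.TensorProduct.tmul_mul_tmul, one_mul, mul_one, op_mul]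
  abel

lemma sub_tmul_one_mem_span_universalDer (ξ : A ⊗[ℂ] Aᵐᵒᵖ) :
    ξ - LinearMap.toSpanSingleton (A ⊗[ℂ] Aᵐᵒᵖ) A 1 ξ ⊗ₜ[ℂ] (1 : Aᵐᵒᵖ) ∈
      Submodule.span (A ⊗[ℂ] Aᵐᵒᵖ)
        (Set.range fun x => (universalDer (A := A) x : A ⊗[ℂ] Aᵐᵒᵖ)) := by
  induction ξ using TensorProduct.induction_on with
  | zero => rw [map_zero, zero_tmul, sub_zero]; exact zero_mem _
  | tmul x z =>
    have : x ⊗ₜ[ℂ] z - (x * z.unop) ⊗ₜ[ℂ] (1 : Aᵐᵒᵖ) =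
        -((x ⊗ₜ[ℂ] (1 : Aᵐᵒᵖ)) • (universalDer z.unop : A ⊗[ℂ] Aᵐᵒᵖ)) := by
      simp only [coe_universalDer, smul_eq_mul, mul_sub, Algebra.TensorProduct.tmul_mul_tmul,
        mul_one, one_mul, op_unop]
      abel
    rw [toSpanSingleton_one_tmul, this]
    exact neg_mem (Submodule.smul_mem _ _ (Submodule.subset_span ⟨z.unop, rfl⟩))
  | add ξ η hξ hη =>
    convert add_mem hξ hη using 1
    rw [map_add, TensorProduct.add_tmul]
    abel

lemma omega1_le_span_universalDer :
    Omega1 A ≤ Submodule.span (A ⊗[ℂ] Aᵐᵒᵖ)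
      (Set.range fun x => (universalDer (A := A) x : A ⊗[ℂ] Aᵐᵒᵖ)) := by
  intro ω hω
  simpa [LinearMap.mem_ker.mp hω] using sub_tmul_one_mem_span_universalDer ω

noncomputable def outDerOfHom :
    (Omega1 A →ₗ[A ⊗[ℂ] Aᵐᵒᵖ] A ⊗[ℂ] Aᵐᵒᵖ) →+ OutDer A where
  toFun φ := ⟨envEquiv.symm.toLinearMap ∘ₗ φ.restrictScalars ℂ ∘ₗ universalDer, by
    intro x y
    simp only [LinearMap.comp_apply, LinearEquiv.coe_coe, LinearMap.coe_restrictScalars,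
      universalDer_mul, map_add, map_smul, smul_eq_mul, envEquiv_symm_mul_left, unop_one,
      ← Algebra.TensorProduct.one_def, mul_one, one_mul]
    exact add_comm _ _⟩
  map_zero' := by ext; simp
  map_add' φ ψ := by ext; simp

lemma outDerOfHom_apply (φ : Omega1 A →ₗ[A ⊗[ℂ] Aᵐᵒᵖ] A ⊗[ℂ] Aᵐᵒᵖ) (x : A) :
    (outDerOfHom φ : A →ₗ[ℂ] A ⊗[ℂ] A) x = envEquiv.symm (φ (universalDer x)) := rfl

lemma outDerOfHom_subtype : outDerOfHom (Omega1 A).subtype = deltaDer := by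
  ext x
  simp [outDerOfHom_apply, deltaDer]

lemma outDerOfHom_smulRight_universalDer (φ : Omega1 A →ₗ[A ⊗[ℂ] Aᵐᵒᵖ] A ⊗[ℂ] Aᵐᵒᵖ) (c : A) :
    outDerOfHom (φ.smulRight (universalDer c : A ⊗[ℂ] Aᵐᵒᵖ)) =
      innerL c (-outDerOfHom φ) - innerR (-outDerOfHom φ) c := by
  ext x
  simp only [outDerOfHom_apply, LinearMap.smulRight_apply, smul_eq_mul, coe_universalDer,
    mul_sub, map_sub, envEquiv_symm_mul_right, unop_one, unop_op,
    ← Algebra.TensorProduct.one_def, mul_one, one_mul]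
  simp [innerL, innerR, outDerOfHom_apply]
  abel

variable (A) in
def commutatorSpan : Submodule ℂ (OutDer A) :=
  Submodule.span ℂ {d | ∃ (a : A) (δ : OutDer A), d = innerL a δ - innerR δ a}

lemma outDerOfHom_smulRight_mem_commutatorSpan {g : A ⊗[ℂ] Aᵐᵒᵖ}
    (hg : g ∈ Submodule.span (A ⊗[ℂ] Aᵐᵒᵖ)
      (Set.range fun x => (universalDer (A := A) x : A ⊗[ℂ] Aᵐᵒᵖ)))
    (φ : Omega1 A →ₗ[A ⊗[ℂ] Aᵐᵒᵖ] A ⊗[ℂ] Aᵐᵒᵖ) :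
    outDerOfHom (φ.smulRight g) ∈ commutatorSpan A := by
  induction hg using Submodule.span_induction generalizing φ with
  | mem g hg =>
    obtain ⟨c, rfl⟩ := hg
    rw [outDerOfHom_smulRight_universalDer]
    exact Submodule.subset_span ⟨c, _, rfl⟩
  | zero =>
    have hzero : φ.smulRight (0 : A ⊗[ℂ] Aᵐᵒᵖ) = 0 := by ext; simp
    rw [hzero, map_zero]
    exact zero_mem _
  | add g g' _ _ hg hg' =>
    have hadd : φ.smulRight (g + g') = φ.smulRight g + φ.smulRight g' := by ext; simp [mul_add]
    rw [hadd, map_add]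
    exact add_mem (hg φ) (hg' φ)
  | smul r g _ hg =>
    have hsmul : φ.smulRight (r • g) = (φ.smulRight r).smulRight g := by ext; simp [mul_assoc]
    rw [hsmul]
    exact hg _

end Omega1

/-- If `A` is a smooth ℂ-algebra, then the distinguished derivation
`Δ_A : x ↦ x⊗1 − 1⊗x` lies in the commutator subspace `[A, Der(A, A⊗A)]`, i.e. in the
ℂ-linear span of the elements `a·δ − δ·a` for the inner bimodule structure. -/
theorem stmt3 (A : Type u) [Ring A] [Algebra ℂ A] (hA : IsSmoothAlgebra A) :
    deltaDer (A := A) ∈ Submodule.span ℂ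
      {d : ↥(OutDer A) | ∃ (a : A) (δ : ↥(OutDer A)), d = innerL a δ - innerR δ a} := by
  obtain ⟨-, _, _⟩ := hA
  obtain ⟨n, φ, g, hφg⟩ :=
    Module.Finite.exists_sum_smul_eq_self_of_projective (A ⊗[ℂ] Aᵐᵒᵖ) (Omega1 A)
  have hsubtype : (Omega1 A).subtype = ∑ i, (φ i).smulRight (g i : A ⊗[ℂ] Aᵐᵒᵖ) := by
    ext ω
    conv_lhs => rw [← hφg ω]
    simp
  rw [← outDerOfHom_subtype, hsubtype, map_sum]
  exact Submodule.sum_mem _ fun i _ =>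
    outDerOfHom_smulRight_mem_commutatorSpan (omega1_le_span_universalDer (g i).2) (φ i)
end

section
/- Let A be a smooth ℂ-algebra and let μ: A ⊗_ℂ A → A be the multiplication map. For every δ ∈ Der(A, A⊗A), the composite μ∘δ: A → A is an ordinary ℂ-linear derivation of A, and the resulting linear map μ_*: Der(A, A⊗A) → Der(A, A) has kernel exactly the commutator subspace [A, Der(A, A⊗A)]; consequently μ_* induces a ℂ-linear isomorphism Der(A, A⊗A)/[A, Der(A, A⊗A)] ≅ Der(A, A). -/
open TensorProduct

set_option synthInstance.maxHeartbeats 1000000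

universe u

/-- The map `μ_* : Der(A, A⊗A) → (A →ₗ A)` obtained by composing derivations with the
multiplication map `μ : A ⊗[ℂ] A → A`. -/
noncomputable def muStar (A : Type u) [Ring A] [Algebra ℂ A] :
    ↥(OutDer A) →ₗ[ℂ] (A →ₗ[ℂ] A) :=
  (LinearMap.llcomp ℂ A (A ⊗[ℂ] A) A (LinearMap.mul' ℂ A)).comp (OutDer A).subtype

/-!
Transport `A ⊗ A` along `A ⊗ A ≃ A ⊗ Aᵐᵒᵖ = Aᵉ`: the outer bimodule structure becomes the left
regular `Aᵉ`-module, the inner one becomes right multiplication, and `μ` becomes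
`π : Aᵉ → A, ξ ↦ ξ • 1`, whose kernel is `Ω¹A`. By the universal property of `Ω¹A` (for the
universal derivation `x ↦ 1 ⊗ xᵒᵖ - x ⊗ 1`), `Der(A, A⊗A) ≅ Hom_{Aᵉ}(Ω¹A, Aᵉ)` and
`Der(A, A) ≅ Hom_{Aᵉ}(Ω¹A, A)`, with `μ_*` becoming composition with `π`; projectivity of `Ω¹A`
makes it surjective. If `μ_* δ = 0`, the map `Ω¹A → Aᵉ` corresponding to `δ` lands in `Ω¹A`, so
a finite dual basis of `Ω¹A` writes `δ` as a finite sum of derivations multiplied on the right by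
elements of `Ω¹A`. These elements are `ℂ`-combinations of `(a ⊗ 1) · (1 ⊗ bᵒᵖ - b ⊗ 1)`, and
right multiplication by `1 ⊗ bᵒᵖ - b ⊗ 1` is the inner commutator with `b`.
-/

open MulOpposite

theorem Module.Finite.exists_sum_smul_eq_of_projective (R P : Type*) [Semiring R]
    [AddCommMonoid P] [Module R P] [Module.Finite R P] [Module.Projective R P] :
    ∃ (n : ℕ) (φ : Fin n → P →ₗ[R] R) (q : Fin n → P), ∀ p, ∑ j, φ j p • q j = p := by
  classical
  obtain ⟨n, f, g, -, -, hfg⟩ := Module.Finite.exists_comp_eq_id_of_projective R P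
  refine ⟨n, fun j => LinearMap.proj j ∘ₗ g, fun j => f (Pi.single j 1), fun p => ?_⟩
  conv_rhs => rw [← LinearMap.id_apply (R := R) p, ← hfg, LinearMap.comp_apply,
    LinearMap.pi_apply_eq_sum_univ f]
  refine Finset.sum_congr rfl fun i _ => ?_
  dsimp only
  congr 2
  funext j
  simp [Pi.single_apply, eq_comm]

section Enveloping

variable {A : Type u} [Ring A] [Algebra ℂ A]

instance : IsScalarTower ℂ (A ⊗[ℂ] Aᵐᵒᵖ) A where
  smul_assoc c ξ m := by
    induction ξ using TensorProduct.induction_on with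
    | zero =>
      have h : (0 : A ⊗[ℂ] Aᵐᵒᵖ) • m = 0 := zero_smul (A ⊗[ℂ] Aᵐᵒᵖ) m
      rw [smul_zero, h, smul_zero]
    | tmul a b => simp [TensorProduct.smul_tmul', TensorProduct.Algebra.smul_def]
    | add ξ η hξ hη => simp [add_smul, hξ, hη]

lemma tmul_op_smul (a b m : A) : (a ⊗ₜ[ℂ] op b : A ⊗[ℂ] Aᵐᵒᵖ) • m = a * m * b := by
  rw [TensorProduct.Algebra.smul_def, op_smul_eq_mul, smul_eq_mul, mul_assoc]

lemma tmul_one_smul (a m : A) : (a ⊗ₜ 1 : A ⊗[ℂ] Aᵐᵒᵖ) • m = a * m := by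
  simpa using tmul_op_smul a 1 m

variable (A) in
noncomputable def envMul : A ⊗[ℂ] Aᵐᵒᵖ →ₗ[A ⊗[ℂ] Aᵐᵒᵖ] A :=
  LinearMap.toSpanSingleton _ A 1

@[simp] lemma envMul_tmul (a : A) (b : Aᵐᵒᵖ) : envMul A (a ⊗ₜ b) = a * b.unop := by
  simpa [envMul] using tmul_op_smul a b.unop 1

lemma mem_Omega1_iff {ξ : A ⊗[ℂ] Aᵐᵒᵖ} : ξ ∈ Omega1 A ↔ envMul A ξ = 0 := Iff.rfl

lemma envMul_surjective : Function.Surjective (envMul A) :=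
  fun a => ⟨a ⊗ₜ 1, by simp⟩

variable (A) in
noncomputable def tensorOpEquiv : A ⊗[ℂ] A ≃ₗ[ℂ] A ⊗[ℂ] Aᵐᵒᵖ :=
  TensorProduct.congr (LinearEquiv.refl ℂ A) (opLinearEquiv ℂ)

@[simp] lemma tensorOpEquiv_tmul (a b : A) : tensorOpEquiv A (a ⊗ₜ b) = a ⊗ₜ op b := rfl

@[simp] lemma envMul_tensorOpEquiv (u : A ⊗[ℂ] A) :
    envMul A (tensorOpEquiv A u) = LinearMap.mul' ℂ A u := by
  induction u using TensorProduct.induction_on with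
  | zero => simp
  | tmul a b => simp
  | add u v hu hv => simp [hu, hv]

lemma tensorOpEquiv_mul_one_tmul (u : A ⊗[ℂ] A) (y : A) :
    tensorOpEquiv A (u * (1 ⊗ₜ y)) = (1 ⊗ₜ op y) * tensorOpEquiv A u := by
  induction u using TensorProduct.induction_on with
  | zero => simp
  | tmul p q => simp [Algebra.TensorProduct.tmul_mul_tmul]
  | add u v hu hv => simp [add_mul, mul_add, hu, hv]

lemma tensorOpEquiv_tmul_one_mul (x : A) (u : A ⊗[ℂ] A) :
    tensorOpEquiv A ((x ⊗ₜ 1) * u) = (x ⊗ₜ 1) * tensorOpEquiv A u := by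
  induction u using TensorProduct.induction_on with
  | zero => simp
  | tmul p q => simp [Algebra.TensorProduct.tmul_mul_tmul]
  | add u v hu hv => simp [mul_add, hu, hv]

lemma tensorOpEquiv_one_tmul_mul (a : A) (u : A ⊗[ℂ] A) :
    tensorOpEquiv A ((1 ⊗ₜ a) * u) = tensorOpEquiv A u * (1 ⊗ₜ op a) := by
  induction u using TensorProduct.induction_on with
  | zero => simp
  | tmul p q => simp [Algebra.TensorProduct.tmul_mul_tmul]
  | add u v hu hv => simp [mul_add, add_mul, hu, hv]

lemma tensorOpEquiv_mul_tmul_one (u : A ⊗[ℂ] A) (a : A) :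
    tensorOpEquiv A (u * (a ⊗ₜ 1)) = tensorOpEquiv A u * (a ⊗ₜ 1) := by
  induction u using TensorProduct.induction_on with
  | zero => simp
  | tmul p q => simp [Algebra.TensorProduct.tmul_mul_tmul]
  | add u v hu hv => simp [add_mul, hu, hv]

end Enveloping

section BimoduleDerivation

variable {A : Type u} [Ring A] [Algebra ℂ A]
variable {M N : Type*} [AddCommMonoid M] [Module (A ⊗[ℂ] Aᵐᵒᵖ) M] [Module ℂ M]
  [AddCommMonoid N] [Module (A ⊗[ℂ] Aᵐᵒᵖ) N] [Module ℂ N]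

/-- An `A`-bimodule is encoded as an `Aᵉ`-module, with `(x ⊗ yᵒᵖ) • m = x m y`. -/
def IsBimoduleDerivation (D : A →ₗ[ℂ] M) : Prop :=
  ∀ x y, D (x * y) = ((1 : A) ⊗ₜ op y : A ⊗[ℂ] Aᵐᵒᵖ) • D x + (x ⊗ₜ 1 : A ⊗[ℂ] Aᵐᵒᵖ) • D y

lemma IsBimoduleDerivation.comp [IsScalarTower ℂ (A ⊗[ℂ] Aᵐᵒᵖ) M]
    [IsScalarTower ℂ (A ⊗[ℂ] Aᵐᵒᵖ) N] {D : A →ₗ[ℂ] M} (hD : IsBimoduleDerivation D)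
    (f : M →ₗ[A ⊗[ℂ] Aᵐᵒᵖ] N) : IsBimoduleDerivation (f.restrictScalars ℂ ∘ₗ D) := by
  intro x y
  simp [hD x y]

lemma IsBimoduleDerivation.map_one {M : Type*} [AddCommGroup M] [Module (A ⊗[ℂ] Aᵐᵒᵖ) M]
    [Module ℂ M] {D : A →ₗ[ℂ] M} (hD : IsBimoduleDerivation D) : D 1 = 0 := by
  have h := hD 1 1
  rw [one_mul, op_one, ← Algebra.TensorProduct.one_def, one_smul] at h
  simpa using h

lemma isBimoduleDerivation_iff {d : A →ₗ[ℂ] A} :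
    IsBimoduleDerivation d ↔ ∀ x y, d (x * y) = d x * y + x * d y := by
  simp only [IsBimoduleDerivation, tmul_op_smul, tmul_one_smul, one_mul]

variable (A) in
noncomputable def univDer : A →ₗ[ℂ] A ⊗[ℂ] Aᵐᵒᵖ :=
  TensorProduct.mk ℂ A Aᵐᵒᵖ 1 ∘ₗ (opLinearEquiv ℂ).toLinearMap
    - (TensorProduct.mk ℂ A Aᵐᵒᵖ).flip 1

lemma univDer_apply (x : A) : univDer A x = 1 ⊗ₜ op x - x ⊗ₜ 1 := rfl

lemma univDer_mem_Omega1 (x : A) : univDer A x ∈ Omega1 A := by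
  simp [mem_Omega1_iff, univDer_apply]

lemma sub_envMul_tmul_one_mem_span (ξ : A ⊗[ℂ] Aᵐᵒᵖ) :
    ξ - envMul A ξ ⊗ₜ 1 ∈ Submodule.span ℂ
      (Set.range fun ab : A × A => (ab.1 ⊗ₜ 1 : A ⊗[ℂ] Aᵐᵒᵖ) * univDer A ab.2) := by
  induction ξ using TensorProduct.induction_on with
  | zero => simp
  | tmul a b =>
    refine Submodule.subset_span ⟨(a, b.unop), ?_⟩
    simp [univDer_apply, mul_sub, Algebra.TensorProduct.tmul_mul_tmul]
  | add ξ η hξ hη =>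
    rw [map_add, TensorProduct.add_tmul, add_sub_add_comm]
    exact Submodule.add_mem _ hξ hη

lemma Omega1.mem_span_tmul_one_mul_univDer {ξ : A ⊗[ℂ] Aᵐᵒᵖ} (hξ : ξ ∈ Omega1 A) :
    ξ ∈ Submodule.span ℂ
      (Set.range fun ab : A × A => (ab.1 ⊗ₜ 1 : A ⊗[ℂ] Aᵐᵒᵖ) * univDer A ab.2) := by
  simpa [mem_Omega1_iff.mp hξ] using sub_envMul_tmul_one_mem_span ξ

noncomputable def Omega1.der : A →ₗ[ℂ] Omega1 A where
  toFun x := ⟨univDer A x, univDer_mem_Omega1 x⟩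
  map_add' x y := Subtype.ext (map_add _ x y)
  map_smul' c x := Subtype.ext (map_smul _ c x)

lemma Omega1.isBimoduleDerivation_der : IsBimoduleDerivation (Omega1.der (A := A)) := by
  intro x y
  ext
  simp only [Omega1.der, LinearMap.coe_mk, AddHom.coe_mk, Submodule.coe_add,
    Submodule.coe_smul, smul_eq_mul, univDer_apply, mul_sub,
    Algebra.TensorProduct.tmul_mul_tmul, one_mul, mul_one, op_mul]
  abel

end BimoduleDerivation

section UniversalProperty

variable {A : Type u} [Ring A] [Algebra ℂ A]
variable {M N : Type*} [AddCommGroup M] [Module (A ⊗[ℂ] Aᵐᵒᵖ) M] [Module ℂ M]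
  [IsScalarTower ℂ (A ⊗[ℂ] Aᵐᵒᵖ) M] [AddCommGroup N] [Module (A ⊗[ℂ] Aᵐᵒᵖ) N] [Module ℂ N]
  [IsScalarTower ℂ (A ⊗[ℂ] Aᵐᵒᵖ) N]

noncomputable def envLift (D : A →ₗ[ℂ] M) : A ⊗[ℂ] Aᵐᵒᵖ →ₗ[ℂ] M :=
  TensorProduct.lift <| ((Algebra.lsmul ℂ ℂ M).comp
    (Algebra.TensorProduct.includeLeft : A →ₐ[ℂ] A ⊗[ℂ] Aᵐᵒᵖ)).toLinearMap.compl₂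
    (D ∘ₗ (opLinearEquiv ℂ).symm.toLinearMap)

@[simp] lemma envLift_tmul (D : A →ₗ[ℂ] M) (a : A) (b : Aᵐᵒᵖ) :
    envLift D (a ⊗ₜ b) = (a ⊗ₜ 1 : A ⊗[ℂ] Aᵐᵒᵖ) • D b.unop := rfl

@[simp] lemma envLift_zero : envLift (0 : A →ₗ[ℂ] M) = 0 :=
  TensorProduct.ext' fun a b => by simp

lemma envLift_comp (f : M →ₗ[A ⊗[ℂ] Aᵐᵒᵖ] N) (D : A →ₗ[ℂ] M) :
    envLift (f.restrictScalars ℂ ∘ₗ D) = f.restrictScalars ℂ ∘ₗ envLift D :=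
  TensorProduct.ext' fun a b => by simp

lemma envLift_mul {D : A →ₗ[ℂ] M} (hD : IsBimoduleDerivation D) (η ξ : A ⊗[ℂ] Aᵐᵒᵖ) :
    envLift D (η * ξ) = η • envLift D ξ + envLift D (η * (envMul A ξ ⊗ₜ 1)) := by
  induction ξ using TensorProduct.induction_on with
  | zero => simp
  | add ξ ξ' h h' =>
    simp only [mul_add, map_add, TensorProduct.add_tmul, smul_add, h, h']
    abel
  | tmul a b =>
    induction η using TensorProduct.induction_on with
    | zero =>
      rw [zero_mul, zero_mul, map_zero, add_zero]
      exact (zero_smul (A ⊗[ℂ] Aᵐᵒᵖ) (envLift D (a ⊗ₜ b))).symm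
    | add η η' h h' =>
      simp only [add_mul, map_add, add_smul, h, h']
      abel
    | tmul c e =>
      simp only [Algebra.TensorProduct.tmul_mul_tmul, envLift_tmul, envMul_tmul, unop_mul]
      rw [hD, smul_add, ← mul_smul, ← mul_smul, ← mul_smul]
      simp only [Algebra.TensorProduct.tmul_mul_tmul, mul_one, one_mul, op_unop, unop_one,
        mul_assoc]

noncomputable def Omega1.lift (D : A →ₗ[ℂ] M) (hD : IsBimoduleDerivation D) :
    Omega1 A →ₗ[A ⊗[ℂ] Aᵐᵒᵖ] M where
  toFun p := envLift D p
  map_add' p q := map_add _ _ _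
  map_smul' η p := by
    rw [RingHom.id_apply, Submodule.coe_smul, smul_eq_mul, envLift_mul hD,
      mem_Omega1_iff.mp p.2, TensorProduct.zero_tmul, mul_zero, map_zero, add_zero]

@[simp] lemma Omega1.lift_der (D : A →ₗ[ℂ] M) (hD : IsBimoduleDerivation D) (x : A) :
    Omega1.lift D hD (Omega1.der x) = D x := by
  change envLift D (univDer A x) = D x
  rw [univDer_apply, map_sub, envLift_tmul, envLift_tmul, unop_op, unop_one, hD.map_one,
    smul_zero, sub_zero, ← Algebra.TensorProduct.one_def, one_smul]

end UniversalProperty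

def innerCommutatorSpan (A : Type u) [Ring A] [Algebra ℂ A] : Submodule ℂ (OutDer A) :=
  Submodule.span ℂ {d | ∃ (a : A) (δ : OutDer A), d = innerL a δ - innerR δ a}

namespace OutDer

variable {A : Type u} [Ring A] [Algebra ℂ A]

lemma mem_iff_isBimoduleDerivation (δ : A →ₗ[ℂ] A ⊗[ℂ] A) :
    δ ∈ OutDer A ↔ IsBimoduleDerivation ((tensorOpEquiv A).toLinearMap ∘ₗ δ) := by
  refine forall₂_congr fun x y => ?_
  rw [← (tensorOpEquiv A).injective.eq_iff]
  simp [tensorOpEquiv_mul_one_tmul, tensorOpEquiv_tmul_one_mul]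

lemma isBimoduleDerivation (δ : OutDer A) :
    IsBimoduleDerivation ((tensorOpEquiv A).toLinearMap ∘ₗ (δ : A →ₗ[ℂ] A ⊗[ℂ] A)) :=
  (mem_iff_isBimoduleDerivation _).mp δ.2

noncomputable def ofBimoduleDerivation (D : A →ₗ[ℂ] A ⊗[ℂ] Aᵐᵒᵖ)
    (hD : IsBimoduleDerivation D) : OutDer A :=
  ⟨(tensorOpEquiv A).symm.toLinearMap ∘ₗ D, (mem_iff_isBimoduleDerivation _).mpr <| by
    simpa [← LinearMap.comp_assoc] using hD⟩

@[simp] lemma ofBimoduleDerivation_apply (D : A →ₗ[ℂ] A ⊗[ℂ] Aᵐᵒᵖ)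
    (hD : IsBimoduleDerivation D) (x : A) :
    (ofBimoduleDerivation D hD : A →ₗ[ℂ] A ⊗[ℂ] A) x = (tensorOpEquiv A).symm (D x) := rfl

noncomputable def toHom (δ : OutDer A) : Omega1 A →ₗ[A ⊗[ℂ] Aᵐᵒᵖ] A ⊗[ℂ] Aᵐᵒᵖ :=
  Omega1.lift _ (isBimoduleDerivation δ)

noncomputable def ofHom (ψ : Omega1 A →ₗ[A ⊗[ℂ] Aᵐᵒᵖ] A ⊗[ℂ] Aᵐᵒᵖ) : OutDer A :=
  ofBimoduleDerivation _ (Omega1.isBimoduleDerivation_der.comp ψ)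

@[simp] lemma ofHom_apply (ψ : Omega1 A →ₗ[A ⊗[ℂ] Aᵐᵒᵖ] A ⊗[ℂ] Aᵐᵒᵖ) (x : A) :
    (ofHom ψ : A →ₗ[ℂ] A ⊗[ℂ] A) x = (tensorOpEquiv A).symm (ψ (Omega1.der x)) := rfl

lemma ofHom_toHom (δ : OutDer A) : ofHom (toHom δ) = δ := by
  ext x
  simp [toHom]

lemma muStar_apply (δ : OutDer A) (x : A) :
    muStar A δ x = envMul A (tensorOpEquiv A ((δ : A →ₗ[ℂ] A ⊗[ℂ] A) x)) := by
  simp [muStar]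

lemma muStar_ofHom (ψ : Omega1 A →ₗ[A ⊗[ℂ] Aᵐᵒᵖ] A ⊗[ℂ] Aᵐᵒᵖ) (x : A) :
    muStar A (ofHom ψ) x = envMul A (ψ (Omega1.der x)) := by
  simp [muStar_apply]

lemma isBimoduleDerivation_muStar (δ : OutDer A) : IsBimoduleDerivation (muStar A δ) := by
  convert (isBimoduleDerivation δ).comp (envMul A) using 1
  ext x
  simp [muStar_apply]

lemma envMul_toHom {δ : OutDer A} (hδ : δ ∈ LinearMap.ker (muStar A)) (p : Omega1 A) :
    envMul A (toHom δ p) = 0 := by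
  have h : (envMul A).restrictScalars ℂ ∘ₗ
      ((tensorOpEquiv A).toLinearMap ∘ₗ (δ : A →ₗ[ℂ] A ⊗[ℂ] A)) = 0 := by
    ext x
    simpa [muStar_apply] using LinearMap.congr_fun hδ x
  change (envMul A).restrictScalars ℂ (envLift _ (p : A ⊗[ℂ] Aᵐᵒᵖ)) = 0
  rw [← LinearMap.comp_apply, ← envLift_comp, h, envLift_zero, LinearMap.zero_apply]

noncomputable def rmul (δ : OutDer A) : A ⊗[ℂ] Aᵐᵒᵖ →ₗ[ℂ] OutDer A where
  toFun q := ofBimoduleDerivation _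
    ((isBimoduleDerivation δ).comp (LinearMap.toSpanSingleton _ _ q))
  map_add' q q' := by ext x; simp [mul_add]
  map_smul' c q := by ext x; simp [mul_smul_comm]

lemma rmul_apply (δ : OutDer A) (q : A ⊗[ℂ] Aᵐᵒᵖ) (x : A) :
    (rmul δ q : A →ₗ[ℂ] A ⊗[ℂ] A) x =
      (tensorOpEquiv A).symm (tensorOpEquiv A ((δ : A →ₗ[ℂ] A ⊗[ℂ] A) x) * q) := rfl

lemma rmul_mul (δ : OutDer A) (q q' : A ⊗[ℂ] Aᵐᵒᵖ) :
    rmul δ (q * q') = rmul (rmul δ q) q' := by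
  ext x
  simp [rmul_apply, mul_assoc]

lemma rmul_univDer (δ : OutDer A) (a : A) :
    rmul δ (univDer A a) = innerL a δ - innerR δ a := by
  ext x
  apply (tensorOpEquiv A).injective
  simp [rmul_apply, innerL, innerR, univDer_apply, tensorOpEquiv_one_tmul_mul,
    tensorOpEquiv_mul_tmul_one]

lemma muStar_rmul (δ : OutDer A) {q : A ⊗[ℂ] Aᵐᵒᵖ} (hq : q ∈ Omega1 A) :
    muStar A (rmul δ q) = 0 := by
  ext x
  rw [muStar_apply, rmul_apply, LinearEquiv.apply_symm_apply, ← smul_eq_mul, map_smul,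
    mem_Omega1_iff.mp hq, smul_zero, LinearMap.zero_apply]

lemma rmul_mem_innerCommutatorSpan (δ : OutDer A) {q : A ⊗[ℂ] Aᵐᵒᵖ} (hq : q ∈ Omega1 A) :
    rmul δ q ∈ innerCommutatorSpan A := by
  suffices h : Submodule.span ℂ (Set.range fun ab : A × A =>
      (ab.1 ⊗ₜ 1 : A ⊗[ℂ] Aᵐᵒᵖ) * univDer A ab.2) ≤ (innerCommutatorSpan A).comap (rmul δ) from
    h (Omega1.mem_span_tmul_one_mul_univDer hq)
  rw [Submodule.span_le]
  rintro _ ⟨⟨a, b⟩, rfl⟩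
  rw [SetLike.mem_coe, Submodule.mem_comap, rmul_mul, rmul_univDer]
  exact Submodule.subset_span ⟨b, _, rfl⟩

lemma ofHom_eq_sum_rmul {n : ℕ} (ψ : Omega1 A →ₗ[A ⊗[ℂ] Aᵐᵒᵖ] A ⊗[ℂ] Aᵐᵒᵖ)
    (φ : Fin n → Omega1 A →ₗ[A ⊗[ℂ] Aᵐᵒᵖ] A ⊗[ℂ] Aᵐᵒᵖ) (c : Fin n → A ⊗[ℂ] Aᵐᵒᵖ)
    (h : ∀ p, ψ p = ∑ j, φ j p * c j) :
    ofHom ψ = ∑ j, rmul (ofHom (φ j)) (c j) := by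
  ext x
  simp [h, rmul_apply, LinearMap.sum_apply]

theorem ker_muStar [Module.Finite (A ⊗[ℂ] Aᵐᵒᵖ) (Omega1 A)]
    [Module.Projective (A ⊗[ℂ] Aᵐᵒᵖ) (Omega1 A)] :
    LinearMap.ker (muStar A) = innerCommutatorSpan A := by
  refine le_antisymm (fun δ hδ => ?_) (Submodule.span_le.mpr ?_)
  · obtain ⟨n, φ, q, hφq⟩ :=
      Module.Finite.exists_sum_smul_eq_of_projective (A ⊗[ℂ] Aᵐᵒᵖ) (Omega1 A)
    have hδ_sum : ∀ p, toHom δ p = ∑ j, φ j p * toHom δ (q j) := fun p => by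
      conv_lhs => rw [← hφq p]
      simp [smul_eq_mul]
    rw [← ofHom_toHom δ, ofHom_eq_sum_rmul _ φ _ hδ_sum]
    exact Submodule.sum_mem _ fun j _ => rmul_mem_innerCommutatorSpan _ (envMul_toHom hδ _)
  · rintro _ ⟨a, δ, rfl⟩
    rw [SetLike.mem_coe, LinearMap.mem_ker, ← rmul_univDer]
    exact muStar_rmul δ (univDer_mem_Omega1 a)

theorem range_muStar [Module.Projective (A ⊗[ℂ] Aᵐᵒᵖ) (Omega1 A)] :
    Set.range (muStar A) = {d : A →ₗ[ℂ] A | ∀ x y : A, d (x * y) = d x * y + x * d y} := by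
  ext d
  refine ⟨fun ⟨δ, hδ⟩ => hδ ▸ isBimoduleDerivation_iff.mp (isBimoduleDerivation_muStar δ),
    fun hd => ?_⟩
  obtain ⟨ψ, hψ⟩ := Module.projective_lifting_property (envMul A)
    (Omega1.lift d (isBimoduleDerivation_iff.mpr hd)) envMul_surjective
  refine ⟨ofHom ψ, LinearMap.ext fun x => ?_⟩
  rw [muStar_ofHom, ← LinearMap.comp_apply, hψ, Omega1.lift_der]

end OutDer

/-- Let `A` be a smooth ℂ-algebra and `μ : A ⊗[ℂ] A → A` the
multiplication map.  For every `δ ∈ Der(A, A⊗A)` the composite `μ∘δ` is an ordinary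
derivation of `A`; the resulting linear map `μ_* : Der(A, A⊗A) → Der(A, A)` has kernel
exactly the commutator subspace `[A, Der(A, A⊗A)]` and has image the space of all
derivations of `A`; consequently `μ_*` induces an isomorphism
`Der(A, A⊗A)/[A, Der(A, A⊗A)] ≅ Der(A, A)`. -/
theorem stmt4 (A : Type u) [Ring A] [Algebra ℂ A] (hA : IsSmoothAlgebra A) :
    (∀ (δ : ↥(OutDer A)) (x y : A),
        LinearMap.mul' ℂ A ((δ : A →ₗ[ℂ] A ⊗[ℂ] A) (x * y)) =
          LinearMap.mul' ℂ A ((δ : A →ₗ[ℂ] A ⊗[ℂ] A) x) * y +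
            x * LinearMap.mul' ℂ A ((δ : A →ₗ[ℂ] A ⊗[ℂ] A) y)) ∧
    LinearMap.ker (muStar A) = Submodule.span ℂ
      {d : ↥(OutDer A) | ∃ (a : A) (δ : ↥(OutDer A)), d = innerL a δ - innerR δ a} ∧
    Set.range (muStar A) =
      {d : A →ₗ[ℂ] A | ∀ x y : A, d (x * y) = d x * y + x * d y} := by
  obtain ⟨-, _, _⟩ := hA
  exact ⟨fun δ => isBimoduleDerivation_iff.mp (OutDer.isBimoduleDerivation_muStar δ),
    OutDer.ker_muStar, OutDer.range_muStar⟩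
end
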